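/- arXiv:1305.4260 — 2 statements merged into one kernel-verified Lean document; each statement's English description precedes it below -/
import Mathlib

section
/- Let Σ be a finite set of matrices in T^{n×n}, each with ρ(A) = 0, set M = ⋁_{A∈Σ} A (entrywise max), and assume ρ(M) = 0 and that u ∈ ℝ^n is a visualization of M (M⊙u ≤ u). If in addition every A ∈ Σ has ultimate rank n (all nodes of G(A) critical), then u is a common eigenvector: A⊙u = u for every A ∈ Σ, and moreover P⊙u = u and ρ(P) = 0 for every product P of matrices of Σ. -/
/-- The max-plus (tropical) semiring `T = ℝ ∪ {-∞}`. -/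
abbrev T : Type := WithBot ℝ

/-- Tropical matrix product. -/
noncomputable def tmul {n m k : ℕ} (A : Fin n → Fin m → T) (B : Fin m → Fin k → T) :
    Fin n → Fin k → T :=
  fun i j => Finset.univ.sup fun l => A i l + B l j

/-- Tropical matrix-vector product. -/
noncomputable def tmulVec {n m : ℕ} (A : Fin n → Fin m → T) (u : Fin m → T) : Fin n → T :=
  fun i => Finset.univ.sup fun j => A i j + u j

/-- Tropical identity matrix. -/
noncomputable def tId (n : ℕ) : Fin n → Fin n → T :=
  fun i j => if i = j then (0 : T) else ⊥

/-- Tropical matrix powers. -/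
noncomputable def tpow {n : ℕ} (A : Fin n → Fin n → T) : ℕ → (Fin n → Fin n → T)
  | 0 => tId n
  | (m + 1) => tmul (tpow A m) A

/-- Tropical product of a list of matrices (empty product = identity). -/
noncomputable def tProd {n : ℕ} : List (Fin n → Fin n → T) → (Fin n → Fin n → T)
  | [] => tId n
  | (M :: L) => tmul M (tProd L)

/-- Weight of a permutation. -/
noncomputable def wt {n : ℕ} (A : Fin n → Fin n → T) (σ : Equiv.Perm (Fin n)) : T :=
  ∑ i, A i (σ i)

/-- Tropical permanent. -/
noncomputable def per {n : ℕ} (A : Fin n → Fin n → T) : T :=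
  Finset.univ.sup fun σ : Equiv.Perm (Fin n) => wt A σ

/-- Tropical non-singularity: finite permanent attained by a unique permutation. -/
def NonSingular {n : ℕ} (A : Fin n → Fin n → T) : Prop :=
  per A ≠ ⊥ ∧ ∃! σ : Equiv.Perm (Fin n), wt A σ = per A

/-- Weight of the circuit `c 0 → c 1 → ⋯ → c ℓ → c 0` (length `ℓ+1`). -/
noncomputable def cwt {n ℓ : ℕ} (A : Fin n → Fin n → T) (c : Fin (ℓ + 1) → Fin n) : T :=
  ∑ k : Fin (ℓ + 1), A (c k) (c (k + 1))

/-- `ρ(A) = r`: some circuit has mean weight `r`, and every circuit has mean weight `≤ r`. -/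
def RhoEq {n : ℕ} (A : Fin n → Fin n → T) (r : ℝ) : Prop :=
  (∃ ℓ, ∃ c : Fin (ℓ + 1) → Fin n, cwt A c = ((((ℓ : ℝ) + 1) * r : ℝ) : T)) ∧
  ∀ ℓ, ∀ c : Fin (ℓ + 1) → Fin n, cwt A c ≤ ((((ℓ : ℝ) + 1) * r : ℝ) : T)

/-- `(i,j)` is an arc of the critical graph (lies on a circuit of mean weight `r = ρ(A)`). -/
def CritArc {n : ℕ} (A : Fin n → Fin n → T) (r : ℝ) (i j : Fin n) : Prop :=
  ∃ ℓ, ∃ c : Fin (ℓ + 1) → Fin n, cwt A c = ((((ℓ : ℝ) + 1) * r : ℝ) : T) ∧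
    ∃ k : Fin (ℓ + 1), c k = i ∧ c (k + 1) = j

/-- `i` is a node of the critical graph. -/
def CritNode {n : ℕ} (A : Fin n → Fin n → T) (r : ℝ) (i : Fin n) : Prop :=
  ∃ ℓ, ∃ c : Fin (ℓ + 1) → Fin n, cwt A c = ((((ℓ : ℝ) + 1) * r : ℝ) : T) ∧
    ∃ k : Fin (ℓ + 1), c k = i

/-- Reachability in the critical graph. -/
def CritReach {n : ℕ} (A : Fin n → Fin n → T) (r : ℝ) : Fin n → Fin n → Prop :=
  Relation.ReflTransGen (fun i j => CritArc A r i j)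

/-- Same strongly connected component of the critical graph. -/
def SameScc {n : ℕ} (A : Fin n → Fin n → T) (r : ℝ) (i j : Fin n) : Prop :=
  CritReach A r i j ∧ CritReach A r j i

/-- `R` is a set of representatives, one per scc of the critical graph. -/
def SccReps {n : ℕ} (A : Fin n → Fin n → T) (r : ℝ) (R : Finset (Fin n)) : Prop :=
  (∀ i ∈ R, CritNode A r i) ∧
  (∀ i ∈ R, ∀ j ∈ R, i ≠ j → ¬ SameScc A r i j) ∧
  (∀ j, CritNode A r j → ∃ i ∈ R, SameScc A r i j)

/-- Cyclicity of the scc of the critical graph containing `i`: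
the gcd (greatest common divisor) of the lengths of the critical circuits through `i`. -/
noncomputable def cycAt {n : ℕ} (A : Fin n → Fin n → T) (r : ℝ) (i : Fin n) : ℕ :=
  sSup {d : ℕ | ∀ ℓ : ℕ,
    (∃ c : Fin (ℓ + 1) → Fin n, cwt A c = ((((ℓ : ℝ) + 1) * r : ℝ) : T) ∧ c 0 = i) →
    d ∣ (ℓ + 1)}

/-- `A` has an `r × r` tropically non-singular submatrix. -/
def HasNSsub {n m : ℕ} (A : Fin n → Fin m → T) (r : ℕ) : Prop :=
  ∃ f : Fin r → Fin n, ∃ g : Fin r → Fin m,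
    Function.Injective f ∧ Function.Injective g ∧
    NonSingular (fun i j => A (f i) (g j))

/-- Tropical rank: maximal size of a tropically non-singular square submatrix. -/
noncomputable def trrk {n m : ℕ} (A : Fin n → Fin m → T) : ℕ :=
  sSup {r : ℕ | HasNSsub A r}

/-- Tropical convex hull (span) of a finite family of vectors of `T^n`. -/
def tSpan {n m : ℕ} (v : Fin m → (Fin n → T)) : Set (Fin n → T) :=
  { w | ∃ α : Fin m → T, w = fun i => Finset.univ.sup fun j => α j + v j i }

/-- Weak dimension of a tropically convex set: minimal size of a generating family. -/
noncomputable def weakDim {n : ℕ} (X : Set (Fin n → T)) : ℕ :=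
  sInf {k : ℕ | ∃ v : Fin k → (Fin n → T), tSpan v = X}

/-- Column rank: weak dimension of the tropical convex hull of the columns. -/
noncomputable def colrk {n m : ℕ} (A : Fin n → Fin m → T) : ℕ :=
  weakDim (tSpan fun j => fun i => A i j)

/-- Row rank: weak dimension of the tropical convex hull of the rows. -/
noncomputable def rowrk {n m : ℕ} (A : Fin n → Fin m → T) : ℕ :=
  weakDim (tSpan fun i => fun j => A i j)


/-!
Replace each matrix `B` by its visualization `B i j + u j - u i`: this does not change circuit
weights, and `M ⊙ u ≤ u` makes the visualization of every generator `≤ 0` entrywise. Arcs of a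
critical circuit then have visualized weight exactly `0`; since every node of `G(A)` is critical,
each row of the visualized `A` contains a `0`, which is `A ⊙ u = u`. Products inherit the
eigenvector by associativity, and any `P` with `P ⊙ u = u` has `ρ(P) = 0`: its visualized
circuits weigh `≤ 0`, and following a `0` entry out of every row closes a circuit of weight `0`.
-/

lemma Function.exists_cycle_of_finite {α : Type*} [Finite α] [Nonempty α] (g : α → α) :
    ∃ ℓ, ∃ c : Fin (ℓ + 1) → α, ∀ k, c (k + 1) = g (c k) := by
  obtain ⟨x₀⟩ := ‹Nonempty α›
  obtain ⟨a, b, hne, heq⟩ := Finite.exists_ne_map_eq_of_infinite fun k : ℕ => g^[k] x₀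
  wlog hab : a < b generalizing a b
  · exact this b a hne.symm heq.symm (by omega)
  obtain ⟨ℓ, hℓ⟩ : ∃ ℓ, b = (ℓ + 1) + a := ⟨b - a - 1, by omega⟩
  have hper : Function.IsPeriodicPt g (ℓ + 1) (g^[a] x₀) := by
    rw [Function.IsPeriodicPt, Function.IsFixedPt, ← Function.iterate_add_apply, ← hℓ]
    exact heq.symm
  refine ⟨ℓ, fun k => g^[k] (g^[a] x₀), fun k => ?_⟩
  rw [← Function.iterate_succ_apply' g]
  dsimp only
  rw [Fin.val_add_one]
  split_ifs with hk
  · rw [hk, Fin.val_last]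
    exact hper.symm
  · rfl

lemma WithBot.add_finset_sup {α ι : Type*} [LinearOrder α] [AddCommSemigroup α] [AddLeftMono α]
    (s : Finset ι) (f : ι → WithBot α) (a : WithBot α) :
    a + s.sup f = s.sup fun i => a + f i :=
  Finset.apply_sup_eq_sup_comp (a + ·) (fun x y => (max_add_add_left a x y).symm)
    (WithBot.add_bot a)

lemma WithBot.finset_sup_add {α ι : Type*} [LinearOrder α] [AddCommSemigroup α] [AddLeftMono α]
    (s : Finset ι) (f : ι → WithBot α) (a : WithBot α) :
    s.sup f + a = s.sup fun i => f i + a := by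
  simp only [add_comm _ a, WithBot.add_finset_sup]

lemma tmulVec_tmul {n m k : ℕ} (A : Fin n → Fin m → T) (B : Fin m → Fin k → T)
    (v : Fin k → T) : tmulVec (tmul A B) v = tmulVec A (tmulVec B v) := by
  funext i
  simp only [tmulVec, tmul, WithBot.add_finset_sup, WithBot.finset_sup_add, add_assoc]
  exact Finset.sup_comm _ _ _

variable {n : ℕ}

lemma tmulVec_tId (v : Fin n → T) : tmulVec (tId n) v = v := by
  funext i
  apply le_antisymm
  · refine Finset.sup_le fun j _ => ?_
    by_cases h : i = j <;> simp [tId, h]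
  · exact Finset.le_sup_of_le (Finset.mem_univ i) (by simp [tId])

lemma tmulVec_tProd_of_forall_mem {L : List (Fin n → Fin n → T)} {v : Fin n → T}
    (h : ∀ B ∈ L, tmulVec B v = v) : tmulVec (tProd L) v = v := by
  induction L with
  | nil => exact tmulVec_tId v
  | cons B L ih =>
    rw [tProd, tmulVec_tmul, ih fun C hC => h C (List.mem_cons_of_mem B hC)]
    exact h B List.mem_cons_self

/-- The diagonal similarity `D(u)⁻¹ ⊙ B ⊙ D(u)` with `D(u) = diag(u)`; `u` visualizes `B`
exactly when this matrix is `≤ 0` entrywise. -/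
noncomputable def visualize (B : Fin n → Fin n → T) (u : Fin n → ℝ) : Fin n → Fin n → T :=
  fun i j => B i j + ((u j - u i : ℝ) : T)

section Visualize

variable {B : Fin n → Fin n → T} {u : Fin n → ℝ} {i j : Fin n}

lemma visualize_nonpos_iff : visualize B u i j ≤ 0 ↔ B i j + (u j : T) ≤ (u i : T) := by
  simp only [visualize]
  induction B i j using WithBot.recBotCoe
  · simp
  · norm_cast
    constructor <;> intro <;> linarith

lemma visualize_eq_zero_iff : visualize B u i j = 0 ↔ B i j + (u j : T) = (u i : T) := by
  simp only [visualize]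
  induction B i j using WithBot.recBotCoe
  · simp
  · norm_cast
    constructor <;> intro <;> linarith

lemma cwt_visualize {ℓ : ℕ} (c : Fin (ℓ + 1) → Fin n) : cwt (visualize B u) c = cwt B c := by
  have htel : ∑ k, (u (c (k + 1)) - u (c k)) = 0 := by
    rw [Finset.sum_sub_distrib, sub_eq_zero]
    exact Equiv.sum_comp (Equiv.addRight (1 : Fin (ℓ + 1))) fun k => u (c k)
  simp only [cwt, visualize, Finset.sum_add_distrib, ← WithBot.coe_sum, htel, WithBot.coe_zero,
    add_zero]

lemma rhoEq_visualize {r : ℝ} : RhoEq (visualize B u) r ↔ RhoEq B r := by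
  simp only [RhoEq, cwt_visualize]

lemma critArc_visualize {r : ℝ} : CritArc (visualize B u) r i j ↔ CritArc B r i j := by
  simp only [CritArc, cwt_visualize]

end Visualize

lemma rhoEq_zero_iff {B : Fin n → Fin n → T} :
    RhoEq B 0 ↔ (∃ ℓ, ∃ c : Fin (ℓ + 1) → Fin n, cwt B c = 0) ∧
      ∀ ℓ, ∀ c : Fin (ℓ + 1) → Fin n, cwt B c ≤ 0 := by
  simp only [RhoEq, mul_zero, WithBot.coe_zero]

lemma rhoEq_zero_of_nonpos [Nonempty (Fin n)] {C : Fin n → Fin n → T} (hC : ∀ i j, C i j ≤ 0)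
    (hsat : ∀ i, ∃ j, C i j = 0) : RhoEq C 0 := by
  rw [rhoEq_zero_iff]
  refine ⟨?_, fun ℓ c => Finset.sum_nonpos fun k _ => hC _ _⟩
  choose g hg using hsat
  obtain ⟨ℓ, c, hc⟩ := Function.exists_cycle_of_finite g
  exact ⟨ℓ, c, Finset.sum_eq_zero fun k _ => hc k ▸ hg (c k)⟩

lemma eq_zero_of_critArc {C : Fin n → Fin n → T} (hC : ∀ i j, C i j ≤ 0) {i j : Fin n}
    (h : CritArc C 0 i j) : C i j = 0 := by
  obtain ⟨ℓ, c, hc, k, rfl, rfl⟩ := h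
  rw [mul_zero, WithBot.coe_zero, cwt, Finset.sum_eq_zero_iff_of_nonpos fun k _ => hC _ _] at hc
  exact hc k (Finset.mem_univ k)

section Eigenvector

variable {B : Fin n → Fin n → T} {u : Fin n → ℝ}

lemma tmulVec_coe_le_iff :
    (∀ i, tmulVec B (fun j => (u j : T)) i ≤ u i) ↔ ∀ i j, visualize B u i j ≤ 0 := by
  simp only [tmulVec, Finset.sup_le_iff, Finset.mem_univ, true_imp_iff, visualize_nonpos_iff]

lemma tmulVec_coe_eq_iff :
    tmulVec B (fun j => (u j : T)) = (fun j => (u j : T)) ↔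
      (∀ i j, visualize B u i j ≤ 0) ∧ ∀ i, ∃ j, visualize B u i j = 0 := by
  rw [← tmulVec_coe_le_iff]
  constructor
  · intro h
    refine ⟨fun i => (congrFun h i).le, fun i => ?_⟩
    obtain ⟨j, -, hj⟩ := Finset.exists_mem_eq_sup Finset.univ ⟨i, Finset.mem_univ i⟩
      fun j => B i j + (u j : T)
    exact ⟨j, visualize_eq_zero_iff.2 (hj ▸ congrFun h i)⟩
  · rintro ⟨hle, hsat⟩
    funext i
    obtain ⟨j, hj⟩ := hsat i
    exact (hle i).antisymm
      (Finset.le_sup_of_le (Finset.mem_univ j) (visualize_eq_zero_iff.1 hj).ge)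

lemma rhoEq_zero_of_tmulVec_eq [Nonempty (Fin n)]
    (h : tmulVec B (fun j => (u j : T)) = (fun j => (u j : T))) : RhoEq B 0 := by
  obtain ⟨hle, hsat⟩ := tmulVec_coe_eq_iff.1 h
  exact rhoEq_visualize.1 (rhoEq_zero_of_nonpos hle hsat)

end Eigenvector

theorem stmt18_general {n m : ℕ} (A : Fin m → (Fin n → Fin n → T))
    (hurk : ∀ t, ∃ τ : Equiv.Perm (Fin n), ∀ i j, CritArc (A t) 0 i j ↔ j = τ i)
    (M : Fin n → Fin n → T) (hM : ∀ i j, M i j = Finset.univ.sup fun t => A t i j)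
    (hrhoM : RhoEq M 0)
    (u : Fin n → ℝ)
    (hvis : ∀ i, tmulVec M (fun j => ((u j : ℝ) : T)) i ≤ ((u i : ℝ) : T)) :
    (∀ t, ∀ i, tmulVec (A t) (fun j => ((u j : ℝ) : T)) i = ((u i : ℝ) : T)) ∧
    (∀ L : List (Fin m), L ≠ [] →
      (∀ i, tmulVec (tProd (L.map A)) (fun j => ((u j : ℝ) : T)) i = ((u i : ℝ) : T)) ∧
      RhoEq (tProd (L.map A)) 0) := by
  have hM_vis : ∀ i j, visualize M u i j ≤ 0 := tmulVec_coe_le_iff.1 hvis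
  have hA_le_M : ∀ t i j, A t i j ≤ M i j := fun t i j =>
    hM i j ▸ Finset.le_sup (f := fun t => A t i j) (Finset.mem_univ t)
  have hA_vis : ∀ t i j, visualize (A t) u i j ≤ 0 := fun t i j =>
    (add_le_add_left (hA_le_M t i j) _).trans (hM_vis i j)
  -- Row `i` of the visualized `A t` vanishes on the critical arc `i → τ i`.
  have hA_eig : ∀ t, tmulVec (A t) (fun j => (u j : T)) = fun j => (u j : T) := by
    refine fun t => tmulVec_coe_eq_iff.2 ⟨hA_vis t, fun i => ?_⟩
    obtain ⟨τ, hτ⟩ := hurk t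
    exact ⟨τ i, eq_zero_of_critArc (hA_vis t) (critArc_visualize.2 ((hτ i (τ i)).2 rfl))⟩
  have hP_eig : ∀ L : List (Fin m),
      tmulVec (tProd (L.map A)) (fun j => (u j : T)) = fun j => (u j : T) := fun L =>
    tmulVec_tProd_of_forall_mem (by simpa using fun t _ => hA_eig t)
  have : Nonempty (Fin n) := by
    obtain ⟨_, c, -⟩ := hrhoM.1
    exact ⟨c 0⟩
  exact ⟨fun t => congrFun (hA_eig t),
    fun L _ => ⟨congrFun (hP_eig L), rhoEq_zero_of_tmulVec_eq (hP_eig L)⟩⟩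

/-- Let `M` be the entrywise max of the generators (each with `ρ = 0` and
ultimate rank `n`), with `ρ(M) = 0`, and let `u` be a finite visualization of `M`
(`M ⊙ u ≤ u`). Then `u` is a common eigenvector of all generators, and every product `P`
of generators satisfies `P ⊙ u = u` and `ρ(P) = 0`. -/
theorem stmt18 {n m : ℕ} (A : Fin m → (Fin n → Fin n → T))
    (hrho : ∀ t, RhoEq (A t) 0)
    (hurk : ∀ t, ∃ τ : Equiv.Perm (Fin n), ∀ i j, CritArc (A t) 0 i j ↔ j = τ i)
    (M : Fin n → Fin n → T) (hM : ∀ i j, M i j = Finset.univ.sup fun t => A t i j)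
    (hrhoM : RhoEq M 0)
    (u : Fin n → ℝ)
    (hvis : ∀ i, tmulVec M (fun j => ((u j : ℝ) : T)) i ≤ ((u i : ℝ) : T)) :
    (∀ t, ∀ i, tmulVec (A t) (fun j => ((u j : ℝ) : T)) i = ((u i : ℝ) : T)) ∧
    (∀ L : List (Fin m), L ≠ [] →
      (∀ i, tmulVec (tProd (L.map A)) (fun j => ((u j : ℝ) : T)) i = ((u i : ℝ) : T)) ∧
      RhoEq (tProd (L.map A)) 0) :=
  stmt18_general A hurk M hM hrhoM u hvis
end

section
/- Let E ∈ T^{n×n} be idempotent in the max-plus sense, E⊙E = E, with ρ(E) = 0. Then the tropical rank, the row rank, and the column rank of E all coincide and equal the number of strongly connected components of the critical graph G_c(E). -/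
section Stmt19Helpers

open Finset

lemma Tadd_sup' (a b c : T) : a + (b ⊔ c) = (a+b) ⊔ (a+c) := by
  rcases le_total b c with h | h
  · rw [sup_eq_right.2 h, sup_eq_right.2 (add_le_add_right h a)]
  · rw [sup_eq_left.2 h, sup_eq_left.2 (add_le_add_right h a)]

lemma Tadd_finsetSup {ι : Type*} (a : T) (s : Finset ι) (f : ι → T) :
    a + s.sup f = s.sup fun x => a + f x := by
  induction s using Finset.cons_induction with
  | empty => simp
  | cons x s hx ih => rw [Finset.sup_cons, Finset.sup_cons, Tadd_sup', ih]

lemma Tfinsetsup_add {ι : Type*} (a : T) (s : Finset ι) (f : ι → T) :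
    s.sup f + a = s.sup fun x => f x + a := by
  rw [add_comm, Tadd_finsetSup]; simp_rw [add_comm]

lemma T_cancel {x s : T} (hx : x ≠ ⊥) (h : x = x + s) : s = 0 := by
  induction x using WithBot.recBotCoe with
  | bot => exact absurd rfl hx
  | coe r =>
    induction s using WithBot.recBotCoe with
    | bot => simp at h
    | coe c =>
      have : r = r + c := by exact_mod_cast h
      have : c = 0 := by linarith
      exact_mod_cast this

lemma T_le_zero_of_smul {m : ℕ} (hm : 0 < m) {x : T} (h : m • x ≤ 0) : x ≤ 0 := by
  induction x using WithBot.recBotCoe with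
  | bot => exact bot_le
  | coe r =>
    have h2 : ((m • r : ℝ) : T) ≤ ((0:ℝ):T) := by push_cast; exact_mod_cast h
    have h3 : (m:ℝ) * r ≤ 0 := by
      have := WithBot.coe_le_coe.1 h2
      simpa [nsmul_eq_mul] using this
    have hm' : (0:ℝ) < m := by exact_mod_cast hm
    have : r ≤ 0 := by nlinarith
    exact_mod_cast this

lemma T_sum_ne_bot {ι : Type*} [DecidableEq ι] {s : Finset ι} {f : ι → T} (h : (∑ i ∈ s, f i) ≠ ⊥)
    {i : ι} (hi : i ∈ s) : f i ≠ ⊥ := by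
  intro hb
  apply h
  rw [← Finset.add_sum_erase s f hi, hb, WithBot.bot_add]

lemma sup_equiv {ι κ : Type*} [Fintype ι] [Fintype κ] (e : ι ≃ κ) (f : κ → T) :
    Finset.univ.sup (fun i => f (e i)) = Finset.univ.sup f := by
  apply le_antisymm
  · exact Finset.sup_le fun i _ => Finset.le_sup (Finset.mem_univ (e i))
  · refine Finset.sup_le fun x _ => ?_
    simpa using Finset.le_sup (f := fun i => f (e i)) (Finset.mem_univ (e.symm x))

lemma Rsup_equiv {n : ℕ} (s : Finset (Fin n)) (f : Fin n → T) :
    s.sup f = Finset.univ.sup fun m : Fin s.card => f (s.equivFin.symm m) := by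
  rw [← Finset.sup_attach, ← Finset.univ_eq_attach,
    ← sup_equiv s.equivFin.symm (fun x : {x // x ∈ s} => f x)]

lemma mem_tSpan {n m : ℕ} (v : Fin m → Fin n → T) (j : Fin m) : v j ∈ tSpan v := by
  refine ⟨fun j' => if j' = j then 0 else ⊥, ?_⟩
  funext i
  apply le_antisymm
  · refine le_trans ?_ (Finset.le_sup (Finset.mem_univ j)); simp
  · refine Finset.sup_le fun j' _ => ?_
    by_cases h : j' = j <;> simp [h]

lemma tSpan_le {n m k : ℕ} (v : Fin m → Fin n → T) (u : Fin k → Fin n → T)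
    (h : ∀ j, u j ∈ tSpan v) : tSpan u ⊆ tSpan v := by
  rintro w ⟨α, rfl⟩
  choose β hβ using h
  refine ⟨fun p => Finset.univ.sup fun j => α j + β j p, ?_⟩
  funext i
  simp_rw [Tfinsetsup_add]
  rw [Finset.sup_comm]
  refine Finset.sup_congr rfl fun j _ => ?_
  simp_rw [add_assoc, ← Tadd_finsetSup]
  rw [hβ j]

lemma tSpan_eq {n m k : ℕ} (v : Fin m → Fin n → T) (u : Fin k → Fin n → T)
    (h1 : ∀ j, u j ∈ tSpan v) (h2 : ∀ j, v j ∈ tSpan u) : tSpan u = tSpan v :=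
  Set.Subset.antisymm (tSpan_le v u h1) (tSpan_le u v h2)

lemma weakDim_eq {n : ℕ} (F : Fin n → Fin n → T) (R : Finset (Fin n))
    (hdiag : ∀ r ∈ R, F r r = 0)
    (hne : ∀ r ∈ R, ∀ r' ∈ R, r ≠ r' → ¬ (0 ≤ F r r' + F r' r))
    (hspan : ∀ i j, F i j = R.sup fun ρ => F i ρ + F ρ j) :
    weakDim (tSpan fun j i => F i j) = R.card := by
  set cols : Fin n → Fin n → T := fun j i => F i j with hcols
  have hmem : R.card ∈ {k : ℕ | ∃ v : Fin k → (Fin n → T), tSpan v = tSpan cols} := by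
    refine ⟨fun m => cols (R.equivFin.symm m), tSpan_eq _ _ ?_ ?_⟩
    · exact fun m => mem_tSpan cols _
    · intro j
      refine ⟨fun m => F (R.equivFin.symm m) j, ?_⟩
      funext i
      have := hspan i j
      rw [Rsup_equiv] at this
      show F i j = _
      rw [this]
      exact Finset.sup_congr rfl fun m _ => add_comm _ _
  have hlow : ∀ k ∈ {k : ℕ | ∃ v : Fin k → (Fin n → T), tSpan v = tSpan cols},
      R.card ≤ k := by
    rintro k ⟨v, hv⟩
    have hcolmem : ∀ r : {x // x ∈ R}, ∃ α : Fin k → T,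
        cols r = fun i => Finset.univ.sup fun j => α j + v j i := by
      intro r
      have : cols r ∈ tSpan v := hv ▸ mem_tSpan cols (r : Fin n)
      exact this
    choose α hα using hcolmem
    have key : ∀ r : {x // x ∈ R}, ∃ j : Fin k,
        α r j + v j r = 0 ∧ ∀ i, α r j + v j i ≤ F i r := by
      intro r
      have h1 : Finset.univ.sup (fun j => α r j + v j (r : Fin n)) = 0 := by
        have := congrFun (hα r) (r : Fin n)
        rw [hcols] at this; dsimp at this
        rw [← this]; exact hdiag r r.2
      have hk : (Finset.univ : Finset (Fin k)).Nonempty := by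
        rcases (Finset.univ : Finset (Fin k)).eq_empty_or_nonempty with h | h
        · rw [h] at h1; simp at h1
        · exact h
      obtain ⟨j, -, hj⟩ := Finset.exists_mem_eq_sup _ hk (fun j => α r j + v j (r : Fin n))
      refine ⟨j, by rw [← hj, h1], fun i => ?_⟩
      have := congrFun (hα r) i
      rw [hcols] at this; dsimp at this
      rw [this]
      exact Finset.le_sup (f := fun j => α r j + v j i) (Finset.mem_univ j)
    choose φ hφ0 hφle using key
    have hinj : Function.Injective φ := by
      intro r r' hrr'
      by_contra hne'
      have hxx : (r : Fin n) ≠ (r' : Fin n) := fun h => hne' (Subtype.ext h)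
      have h1 : α r (φ r) + v (φ r) (r' : Fin n) ≤ F r' r := hφle r (r' : Fin n)
      have h2 : α r' (φ r') + v (φ r') (r : Fin n) ≤ F r r' := hφle r' (r : Fin n)
      rw [hrr'] at h1
      have hsum := add_le_add h1 h2
      have e0 : α r (φ r') + v (φ r') (r : Fin n) = 0 := by rw [← hrr']; exact hφ0 r
      have e0' : α r' (φ r') + v (φ r') (r' : Fin n) = 0 := hφ0 r'
      have hre : (α r (φ r') + v (φ r') (r' : Fin n)) + (α r' (φ r') + v (φ r') (r : Fin n))
          = (α r (φ r') + v (φ r') (r : Fin n)) + (α r' (φ r') + v (φ r') (r' : Fin n)) := by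
        abel
      rw [hre, e0, e0', add_zero] at hsum
      exact hne (r' : Fin n) r'.2 (r : Fin n) r.2 hxx.symm hsum
    have := Fintype.card_le_of_injective φ hinj
    simpa using this
  exact le_antisymm (Nat.sInf_le hmem) (le_csInf ⟨_, hmem⟩ hlow)

end Stmt19Helpers


section Stmt19Crit

variable {n : ℕ} {E : Fin n → Fin n → T}

open scoped Fin.NatCast Fin.CommRing

lemma tr_of (hid : tmul E E = E) (a b c : Fin n) : E a b + E b c ≤ E a c := by
  conv_rhs => rw [← hid]
  exact Finset.le_sup (f := fun l => E a l + E l c) (Finset.mem_univ b)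

lemma diag_le (h0 : RhoEq E 0) (i : Fin n) : E i i ≤ 0 := by
  have := h0.2 0 (fun _ => i)
  simpa [cwt] using this

lemma path_le (hid : tmul E E = E) (g : ℕ → Fin n) :
    ∀ m, (∑ t ∈ Finset.range (m+1), E (g t) (g (t+1))) ≤ E (g 0) (g (m+1)) := by
  intro m
  induction m with
  | zero => simp
  | succ m ih =>
    rw [Finset.sum_range_succ]
    exact le_trans (add_le_add_left ih _) (tr_of hid _ _ _)

lemma path_Ico (hid : tmul E E = E) (g : ℕ → Fin n) (a : ℕ) :
    ∀ b, a < b → (∑ t ∈ Finset.Ico a b, E (g (t+1)) (g t)) ≤ E (g b) (g a) := by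
  intro b
  induction b with
  | zero => omega
  | succ b ih =>
    intro hb
    rcases Nat.lt_or_ge a b with h | h
    · rw [Finset.sum_Ico_succ_top (le_of_lt h)]
      calc (∑ t ∈ Finset.Ico a b, E (g (t+1)) (g t)) + E (g (b+1)) (g b)
          ≤ E (g b) (g a) + E (g (b+1)) (g b) := add_le_add_left (ih h) _
        _ = E (g (b+1)) (g b) + E (g b) (g a) := add_comm _ _
        _ ≤ E (g (b+1)) (g a) := tr_of hid _ _ _
    · have hab : a = b := by omega
      subst hab
      rw [Finset.sum_Ico_succ_top (le_refl a), Finset.Ico_self, Finset.sum_empty, zero_add]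

lemma cwt_rot {ℓ : ℕ} (c : Fin (ℓ+1) → Fin n) (k : Fin (ℓ+1)) :
    cwt E c = ∑ i : Fin (ℓ+1), E (c (k + i)) (c (k + i + 1)) :=
  (Fintype.sum_equiv (Equiv.addLeft k) (fun i => E (c (k + i)) (c (k + i + 1)))
    (fun j => E (c j) (c (j + 1))) (fun _ => rfl)).symm

lemma cwt_range {ℓ : ℕ} (c : Fin (ℓ+1) → Fin n) (k : Fin (ℓ+1)) :
    cwt E c = ∑ t ∈ Finset.range (ℓ+1),
      E (c (k + ((t:ℕ) : Fin (ℓ+1)))) (c (k + ((t:ℕ) : Fin (ℓ+1)) + 1)) := by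
  rw [cwt_rot c k, ← Fin.sum_univ_eq_sum_range
    (fun t => E (c (k + ((t:ℕ) : Fin (ℓ+1)))) (c (k + ((t:ℕ) : Fin (ℓ+1)) + 1))) (ℓ+1)]
  exact Finset.sum_congr rfl fun i _ => by simp [Fin.cast_val_eq_self]

lemma circ_le (hid : tmul E E = E) {ℓ : ℕ} (c : Fin (ℓ+1) → Fin n) (k : Fin (ℓ+1)) :
    cwt E c ≤ E (c k) (c k) := by
  rw [cwt_range c k]
  have h1 : ∀ t ∈ Finset.range (ℓ+1),
      E (c (k + ((t:ℕ) : Fin (ℓ+1)))) (c (k + ((t:ℕ) : Fin (ℓ+1)) + 1))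
      = E (c (k + ((t:ℕ) : Fin (ℓ+1)))) (c (k + (((t+1:ℕ)) : Fin (ℓ+1)))) := by
    intro t _
    congr 2
    push_cast
    ring
  rw [Finset.sum_congr rfl h1]
  have := path_le hid (fun t => c (k + ((t:ℕ) : Fin (ℓ+1)))) ℓ
  simpa using this

lemma node_crit (hid : tmul E E = E) (h0 : RhoEq E 0) {ℓ : ℕ} {c : Fin (ℓ+1) → Fin n}
    (hc : cwt E c = ((((ℓ : ℝ) + 1) * 0 : ℝ) : T)) (k : Fin (ℓ+1)) : E (c k) (c k) = 0 := by
  have hc' : cwt E c = 0 := by simpa using hc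
  exact le_antisymm (diag_le h0 _) (hc' ▸ circ_le hid c k)

lemma arc_crit (hid : tmul E E = E) (h0 : RhoEq E 0) {ℓ : ℕ} {c : Fin (ℓ+1) → Fin n}
    (hc : cwt E c = ((((ℓ : ℝ) + 1) * 0 : ℝ) : T)) (k : Fin (ℓ+1)) :
    E (c k) (c (k + 1)) + E (c (k + 1)) (c k) = 0 := by
  have hc' : cwt E c = 0 := by simpa using hc
  cases ℓ with
  | zero =>
    have h1 : k + 1 = k := Subsingleton.elim (α := Fin 1) _ _
    rw [h1, node_crit hid h0 hc k, add_zero]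
  | succ m =>
    rw [cwt_range c (k+1)] at hc'
    have h1 : ∀ t ∈ Finset.range (m+2),
        E (c (k + 1 + ((t:ℕ) : Fin (m+2)))) (c (k + 1 + ((t:ℕ) : Fin (m+2)) + 1))
        = E (c (k + 1 + ((t:ℕ) : Fin (m+2)))) (c (k + 1 + (((t+1:ℕ)) : Fin (m+2)))) := by
      intro t _
      congr 2
      push_cast
      ring
    rw [Finset.sum_congr rfl h1, Finset.sum_range_succ] at hc'
    set g : ℕ → Fin n := fun t => c (k + 1 + ((t:ℕ) : Fin (m+2))) with hg
    have hkey : k + 1 + ((m+1:ℕ) : Fin (m+2)) = k := by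
      have h3 : (((m+1:ℕ)) : Fin (m+2)) + 1 = ((m+2 : ℕ) : Fin (m+2)) := by push_cast; ring
      have h2 : ((m+1:ℕ) : Fin (m+2)) + 1 = 0 := by rw [h3, Fin.natCast_self]
      calc k + 1 + ((m+1:ℕ) : Fin (m+2)) = k + (((m+1:ℕ) : Fin (m+2)) + 1) := by ring
        _ = k + 0 := by rw [h2]
        _ = k := add_zero k
    have hgl : g (m+1) = c k := congrArg c hkey
    have hgl2 : g (m+2) = c (k+1) := by
      show c _ = c (k+1)
      congr 1
      rw [Fin.natCast_self, add_zero]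
    have hlast : E (g (m+1)) (g (m+1+1)) = E (c k) (c (k+1)) := by
      rw [hgl]
      show E _ (g (m+2)) = _
      rw [hgl2]
    have hpre : (∑ t ∈ Finset.range (m+1), E (g t) (g (t+1))) ≤ E (c (k+1)) (c k) := by
      have := path_le hid g m
      rw [hgl] at this
      have hg0 : g 0 = c (k+1) := by
        show c _ = c (k+1)
        congr 1
        simp
      rwa [hg0] at this
    have hc2 : (∑ t ∈ Finset.range (m+1), E (g t) (g (t+1))) + E (c k) (c (k+1)) = 0 := by
      rw [← hlast]
      exact hc'
    have hle : (0:T) ≤ E (c (k+1)) (c k) + E (c k) (c (k+1)) := by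
      rw [← hc2]
      exact add_le_add_left hpre _
    have hge : E (c (k+1)) (c k) + E (c k) (c (k+1)) ≤ 0 :=
      le_trans (tr_of hid _ _ _) (diag_le h0 _)
    rw [add_comm]
    exact le_antisymm hge hle

lemma P_of_arc (hid : tmul E E = E) (h0 : RhoEq E 0) {i j : Fin n}
    (h : CritArc E 0 i j) : E i j + E j i = 0 := by
  obtain ⟨ℓ, c, hc, k, hki, hkj⟩ := h
  rw [← hki, ← hkj]
  exact arc_crit hid h0 hc k

lemma diag_of_node (hid : tmul E E = E) (h0 : RhoEq E 0) {i : Fin n}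
    (h : CritNode E 0 i) : E i i = 0 := by
  obtain ⟨ℓ, c, hc, k, hki⟩ := h
  rw [← hki]
  exact node_crit hid h0 hc k

lemma node_of_diag {i : Fin n} (h : E i i = 0) : CritNode E 0 i := by
  refine ⟨0, fun _ => i, ?_, 0, rfl⟩
  simp [cwt, h]

lemma arc_of_P {i j : Fin n} (h : E i j + E j i = 0) : CritArc E 0 i j := by
  refine ⟨1, ![i, j], ?_, 0, rfl, rfl⟩
  have h2 : cwt E ![i, j] = E i j + E j i := by
    rw [cwt, Fin.sum_univ_two]
    rfl
  rw [h2, h]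
  norm_num

lemma P_trans (hid : tmul E E = E) (h0 : RhoEq E 0) {a b c : Fin n}
    (h1 : E a b + E b a = 0) (h2 : E b c + E c b = 0) : E a c + E c a = 0 := by
  have hsum : (E a b + E b c) + (E c b + E b a) = 0 := by
    have hre : (E a b + E b c) + (E c b + E b a) = (E a b + E b a) + (E b c + E c b) := by abel
    rw [hre, h1, h2, add_zero]
  have hle : (0:T) ≤ E a c + E c a :=
    hsum ▸ add_le_add (tr_of hid a b c) (tr_of hid c b a)
  have hge : E a c + E c a ≤ 0 := le_trans (tr_of hid a c a) (diag_le h0 a)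
  exact le_antisymm hge hle

lemma P_of_reach (hid : tmul E E = E) (h0 : RhoEq E 0) {i j : Fin n}
    (h : CritReach E 0 i j) : i = j ∨ E i j + E j i = 0 := by
  induction h with
  | refl => exact Or.inl rfl
  | tail hab harc ih =>
    right
    rcases ih with rfl | hP
    · exact P_of_arc hid h0 harc
    · exact P_trans hid h0 hP (P_of_arc hid h0 harc)

lemma scc_of_P {i j : Fin n} (h : E i j + E j i = 0) : SameScc E 0 i j :=
  ⟨Relation.ReflTransGen.single (arc_of_P h),
   Relation.ReflTransGen.single (arc_of_P (by rwa [add_comm]))⟩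

lemma span_lemma (hid : tmul E E = E) (h0 : RhoEq E 0) (R : Finset (Fin n))
    (hR : SccReps E 0 R) (i j : Fin n) : E i j = R.sup fun ρ => E i ρ + E ρ j := by
  apply le_antisymm
  swap
  · exact Finset.sup_le fun ρ _ => tr_of hid i ρ j
  by_cases hij : E i j = ⊥
  · rw [hij]; exact bot_le
  have hne : Nonempty (Fin n) := ⟨i⟩
  have step : ∀ x : {x : Fin n // E i x ≠ ⊥}, ∃ y : {x : Fin n // E i x ≠ ⊥},
      E i x.1 = E i y.1 + E y.1 x.1 := by
    rintro ⟨x, hx⟩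
    have hsup : E i x = Finset.univ.sup fun l => E i l + E l x :=
      (congrFun (congrFun hid i) x).symm
    obtain ⟨y, -, hy⟩ := Finset.exists_mem_eq_sup Finset.univ Finset.univ_nonempty
      (fun l => E i l + E l x)
    have hxy : E i x = E i y + E y x := by rw [hsup, hy]
    have hyb : E i y ≠ ⊥ := by
      intro hb
      rw [hb, WithBot.bot_add] at hxy
      exact hx hxy
    exact ⟨⟨y, hyb⟩, hxy⟩
  choose f hf using step
  set l : ℕ → {x : Fin n // E i x ≠ ⊥} := fun t => f^[t] ⟨j, hij⟩ with hl
  have hstep : ∀ t, E i (l t).1 = E i (l (t+1)).1 + E (l (t+1)).1 (l t).1 := by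
    intro t
    have h2 : l (t+1) = f (l t) := Function.iterate_succ_apply' f t _
    rw [h2]
    exact hf (l t)
  have tel : ∀ a b : ℕ, a ≤ b →
      E i (l a).1 = E i (l b).1 + ∑ t ∈ Finset.Ico a b, E (l (t+1)).1 (l t).1 := by
    intro a b hab
    induction b, hab using Nat.le_induction with
    | base => simp
    | succ b hab ih =>
      rw [Finset.sum_Ico_succ_top hab, ih, hstep b]
      abel
  have main : ∀ A B : ℕ, A < B → (l A).1 = (l B).1 →
      E i j ≤ R.sup fun ρ => E i ρ + E ρ j := by
    intro A B hAB hABeq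
    have hS : ∑ t ∈ Finset.Ico A B, E (l (t+1)).1 (l t).1 = 0 := by
      have h1 := tel A B hAB.le
      rw [← hABeq] at h1
      exact T_cancel (l A).2 h1
    have hq : E (l A).1 (l A).1 = 0 := by
      apply le_antisymm (diag_le h0 _)
      have h2 := path_Ico hid (fun t => (l t).1) A B hAB
      rw [hS, ← hABeq] at h2
      exact h2
    have h2 : (∑ t ∈ Finset.Ico 0 A, E (l (t+1)).1 (l t).1) ≤ E (l A).1 (l 0).1 := by
      rcases Nat.eq_zero_or_pos A with hA | hA
      · subst hA
        rw [Finset.Ico_self, Finset.sum_empty]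
        exact hq.ge
      · exact path_Ico hid (fun t => (l t).1) 0 A hA
    have hl0 : (l 0).1 = j := rfl
    rw [hl0] at h2
    have hiq : E i j ≤ E i (l A).1 + E (l A).1 j := by
      have h1 := tel 0 A (Nat.zero_le A)
      rw [hl0] at h1
      calc E i j = E i (l A).1 + ∑ t ∈ Finset.Ico 0 A, E (l (t+1)).1 (l t).1 := h1
        _ ≤ E i (l A).1 + E (l A).1 j := add_le_add_right h2 _
    obtain ⟨ρ, hρR, hscc⟩ := hR.2.2 (l A).1 (node_of_diag hq)
    have hP : E ρ (l A).1 + E (l A).1 ρ = 0 := by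
      rcases P_of_reach hid h0 hscc.1 with hqeq | hP
      · rw [hqeq, hq, add_zero]
      · exact hP
    have hfinal : E i (l A).1 + E (l A).1 j ≤ E i ρ + E ρ j := by
      have h3 : E i (l A).1 + E (l A).1 j
          = (E i (l A).1 + E (l A).1 ρ) + (E ρ (l A).1 + E (l A).1 j) := by
        have h4 : (E i (l A).1 + E (l A).1 ρ) + (E ρ (l A).1 + E (l A).1 j)
            = (E i (l A).1 + E (l A).1 j) + (E ρ (l A).1 + E (l A).1 ρ) := by abel
        rw [h4, hP, add_zero]
      rw [h3]
      exact add_le_add (tr_of hid i (l A).1 ρ) (tr_of hid ρ (l A).1 j)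
    exact hiq.trans (hfinal.trans (Finset.le_sup (f := fun ρ => E i ρ + E ρ j) hρR))
  obtain ⟨a, b, hab, heq⟩ := Fintype.exists_ne_map_eq_of_card_lt
    (fun t : Fin (n+1) => (l (t:ℕ)).1) (by simp)
  rcases hab.lt_or_gt with h | h
  · exact main a b h heq
  · exact main b a h heq.symm

lemma cyc_decomp {r : ℕ} (f : Fin r → Fin n) (σ : Equiv.Perm (Fin r)) :
    ∃ (ℓ : ℕ) (c : Fin r → Fin (ℓ+1) → Fin n),
      (ℓ+1) • wt (fun i j => E (f i) (f j)) σ = ∑ i, cwt E (c i) ∧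
      ∀ i, c i 0 = f i ∧ (σ i ≠ i → c i (0+1) = f (σ i)) := by
  set m := orderOf σ with hm
  have hm1 : 0 < m := orderOf_pos σ
  have hm' : m - 1 + 1 = m := Nat.succ_pred_eq_of_pos hm1
  refine ⟨m - 1, fun i t => f ((σ ^ ((t : Fin (m-1+1)) : ℕ)) i), ?_, ?_⟩
  · have hci : ∀ (i : Fin r) (t : ℕ),
        f ((σ ^ (((t : Fin (m-1+1)) : Fin (m-1+1)) : ℕ)) i) = f ((σ ^ t) i) := by
      intro i t
      congr 2
      rw [Fin.val_natCast, hm', hm]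
      exact pow_mod_orderOf σ t
    have hcwt : ∀ i : Fin r, cwt E (fun t : Fin (m-1+1) => f ((σ ^ (t : ℕ)) i))
        = ∑ t ∈ Finset.range (m-1+1), E (f ((σ ^ t) i)) (f ((σ ^ (t+1)) i)) := by
      intro i
      rw [cwt_range (fun t : Fin (m-1+1) => f ((σ ^ (t : ℕ)) i)) 0]
      refine Finset.sum_congr rfl fun t _ => ?_
      have e1 : (0 : Fin (m-1+1)) + ((t:ℕ) : Fin (m-1+1)) = ((t:ℕ) : Fin (m-1+1)) :=
        zero_add _
      have e2 : (0 : Fin (m-1+1)) + ((t:ℕ) : Fin (m-1+1)) + 1 = (((t+1:ℕ)) : Fin (m-1+1)) := by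
        push_cast
        ring
      rw [e2, e1]
      rw [show f ((σ ^ ((((t:ℕ) : Fin (m-1+1))) : ℕ)) i) = f ((σ ^ t) i) from hci i t,
        show f ((σ ^ ((((t+1:ℕ) : Fin (m-1+1))) : ℕ)) i) = f ((σ ^ (t+1)) i) from hci i (t+1)]
    have hsum : ∑ i, cwt E (fun t : Fin (m-1+1) => f ((σ ^ (t : ℕ)) i))
        = (m-1+1) • wt (fun i j => E (f i) (f j)) σ := by
      rw [Finset.sum_congr rfl fun i _ => hcwt i, Finset.sum_comm]
      have hinner : ∀ t : ℕ, (∑ i, E (f ((σ ^ t) i)) (f ((σ ^ (t+1)) i)))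
          = wt (fun i j => E (f i) (f j)) σ := by
        intro t
        have h1 : ∀ i : Fin r, (σ ^ (t+1)) i = σ ((σ ^ t) i) := by
          intro i
          rw [pow_succ']
          rfl
        rw [Finset.sum_congr rfl fun i _ => by rw [h1 i]]
        exact Equiv.sum_comp (σ ^ t) (fun x => E (f x) (f (σ x)))
      rw [Finset.sum_congr rfl fun t _ => hinner t, Finset.sum_const, Finset.card_range]
    rw [hsum]
  · intro i
    constructor
    · show f ((σ ^ (((0 : Fin (m-1+1))) : ℕ)) i) = f i
      norm_num
    · intro hσi
      have hσ1 : σ ≠ 1 := by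
        intro h1
        rw [h1] at hσi
        exact hσi rfl
      have h2 : 2 ≤ m := by
        have h1 : m ≠ 1 := fun hh => hσ1 (orderOf_eq_one_iff.1 hh)
        omega
      show f ((σ ^ (((0 + 1 : Fin (m-1+1))) : ℕ)) i) = f (σ i)
      have hv : ((0 + 1 : Fin (m-1+1)) : ℕ) = 1 := by
        rw [zero_add, Fin.val_one', hm']
        exact Nat.mod_eq_of_lt (by omega)
      rw [hv, pow_one]

lemma wt_le (h0 : RhoEq E 0) {r : ℕ} (f : Fin r → Fin n) (σ : Equiv.Perm (Fin r)) :
    wt (fun i j => E (f i) (f j)) σ ≤ 0 := by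
  obtain ⟨ℓ, c, hsum, -⟩ := cyc_decomp f σ
  have hb : ∀ i, cwt E (c i) ≤ 0 := fun i => by simpa using h0.2 ℓ (c i)
  have h1 : (ℓ+1) • wt (fun i j => E (f i) (f j)) σ ≤ 0 :=
    hsum ▸ Finset.sum_nonpos (fun i _ => hb i)
  exact T_le_zero_of_smul (Nat.succ_pos ℓ) h1

lemma wt_arc (hid : tmul E E = E) (h0 : RhoEq E 0) {r : ℕ} (f : Fin r → Fin n)
    (σ : Equiv.Perm (Fin r)) (hw : wt (fun i j => E (f i) (f j)) σ = 0)
    {i₀ : Fin r} (hi : σ i₀ ≠ i₀) :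
    E (f i₀) (f (σ i₀)) + E (f (σ i₀)) (f i₀) = 0 := by
  obtain ⟨ℓ, c, hsum, hend⟩ := cyc_decomp f σ
  rw [hw, smul_zero] at hsum
  have hb : ∀ i, cwt E (c i) ≤ 0 := fun i => by simpa using h0.2 ℓ (c i)
  have hzero : cwt E (c i₀) = 0 := by
    apply le_antisymm (hb i₀)
    have h5 : ∑ x ∈ Finset.univ.erase i₀, cwt E (c x) ≤ 0 :=
      Finset.sum_nonpos (fun i _ => hb i)
    have h6 : cwt E (c i₀) + ∑ x ∈ Finset.univ.erase i₀, cwt E (c x) = 0 := by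
      rw [Finset.add_sum_erase Finset.univ (fun x => cwt E (c x)) (Finset.mem_univ i₀)]
      exact hsum.symm
    calc (0:T) = cwt E (c i₀) + ∑ x ∈ Finset.univ.erase i₀, cwt E (c x) := h6.symm
      _ ≤ cwt E (c i₀) + 0 := add_le_add_right h5 _
      _ = cwt E (c i₀) := add_zero _
  have harc := arc_crit hid h0 (c := c i₀) (by rw [hzero]; norm_num) 0
  rw [(hend i₀).1, (hend i₀).2 hi] at harc
  exact harc

lemma trrk_eq (hid : tmul E E = E) (h0 : RhoEq E 0) (R : Finset (Fin n))
    (hR : SccReps E 0 R) (hRne : R.Nonempty) : trrk E = R.card := by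
  have hdiagR : ∀ ρ ∈ R, E ρ ρ = 0 := fun ρ h => diag_of_node hid h0 (hR.1 ρ h)
  have hPfalse : ∀ r ∈ R, ∀ r' ∈ R, r ≠ r' → ¬ (0 ≤ E r r' + E r' r) := by
    intro r hr r' hr' hrr' h
    have heq : E r r' + E r' r = 0 :=
      le_antisymm (le_trans (tr_of hid r r' r) (diag_le h0 r)) h
    exact hR.2.1 r hr r' hr' hrr' (scc_of_P heq)
  have hmem : HasNSsub E R.card := by
    set F : Fin R.card → Fin n := fun m => (R.equivFin.symm m : Fin n) with hF
    have hFinj : Function.Injective F := fun a b hab =>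
      R.equivFin.symm.injective (Subtype.ext hab)
    have hFR : ∀ m, F m ∈ R := fun m => (R.equivFin.symm m).2
    refine ⟨F, F, hFinj, hFinj, ?_⟩
    set B : Fin R.card → Fin R.card → T := fun i j => E (F i) (F j) with hB
    have hB1 : wt B 1 = 0 := by
      rw [wt]
      rw [Finset.sum_congr rfl fun i _ => ?_]
      · exact Finset.sum_const_zero
      · show B i ((1 : Equiv.Perm (Fin R.card)) i) = 0
        rw [Equiv.Perm.one_apply]
        exact hdiagR _ (hFR i)
    have hper : per B = 0 := by
      apply le_antisymm
      · exact Finset.sup_le fun σ _ => wt_le h0 F σ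
      · exact hB1 ▸ Finset.le_sup (f := fun σ => wt B σ) (Finset.mem_univ 1)
    have huniq : ∀ σ : Equiv.Perm (Fin R.card), wt B σ = 0 → σ = 1 := by
      intro σ hσ
      by_contra hσ1
      have hex : ∃ i, σ i ≠ i := by
        by_contra hall
        push_neg at hall
        exact hσ1 (Equiv.ext hall)
      obtain ⟨i₀, hi₀⟩ := hex
      have harc := wt_arc hid h0 F σ hσ hi₀
      have hneq : F i₀ ≠ F (σ i₀) := fun h => hi₀ ((hFinj h).symm)
      exact hPfalse (F i₀) (hFR i₀) (F (σ i₀)) (hFR (σ i₀)) hneq (le_of_eq harc.symm)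
    refine ⟨?_, 1, by show wt B 1 = per B; rw [hB1, hper], ?_⟩
    · rw [hper]
      exact WithBot.coe_ne_bot
    · intro σ hσ
      rw [hper] at hσ
      exact huniq σ hσ
  have hupper : ∀ k ∈ {r : ℕ | HasNSsub E r}, k ≤ R.card := by
    rintro k ⟨f, g, hf, hg, hpb, σ, hσ, huniq⟩
    by_contra hk
    push_neg at hk
    set B : Fin k → Fin k → T := fun i j => E (f i) (g j) with hB
    have hwtb : wt B σ ≠ ⊥ := by
      rw [hσ]
      exact hpb
    have hdb : ∀ i, B i (σ i) ≠ ⊥ := fun i =>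
      T_sum_ne_bot (f := fun x => B x (σ x)) (s := Finset.univ) hwtb (Finset.mem_univ i)
    have hsp : ∀ i : Fin k, ∃ ρ : {x // x ∈ R},
        E (f i) (ρ : Fin n) + E (ρ : Fin n) (g (σ i)) = B i (σ i) := by
      intro i
      obtain ⟨ρ, hρR, hρ⟩ := Finset.exists_mem_eq_sup R hRne
        (fun ρ => E (f i) ρ + E ρ (g (σ i)))
      exact ⟨⟨ρ, hρR⟩, by rw [← hρ, ← span_lemma hid h0 R hR]⟩
    choose ρ hρ using hsp
    have hcard : Fintype.card {x // x ∈ R} < Fintype.card (Fin k) := by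
      rw [Fintype.card_coe, Fintype.card_fin]
      exact hk
    obtain ⟨i, j, hij, hρij⟩ := Fintype.exists_ne_map_eq_of_card_lt ρ hcard
    have hkey : B i (σ i) + B j (σ j) ≤ B i (σ j) + B j (σ i) := by
      have h1 : E (f i) (ρ i : Fin n) + E (ρ i : Fin n) (g (σ j)) ≤ B i (σ j) := by
        rw [hB]
        dsimp only
        rw [span_lemma hid h0 R hR (f i) (g (σ j))]
        exact Finset.le_sup (f := fun ρ => E (f i) ρ + E ρ (g (σ j))) (ρ i).2
      have h2 : E (f j) (ρ i : Fin n) + E (ρ i : Fin n) (g (σ i)) ≤ B j (σ i) := by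
        rw [hB]
        dsimp only
        rw [span_lemma hid h0 R hR (f j) (g (σ i))]
        exact Finset.le_sup (f := fun ρ => E (f j) ρ + E ρ (g (σ i))) (ρ i).2
      have h3 : B i (σ i) + B j (σ j)
          = (E (f i) (ρ i : Fin n) + E (ρ i : Fin n) (g (σ j)))
            + (E (f j) (ρ i : Fin n) + E (ρ i : Fin n) (g (σ i))) := by
        rw [← hρ i]
        conv_lhs => rw [← hρ j]
        rw [hρij]
        abel
      rw [h3]
      exact add_le_add h1 h2
    set τ : Equiv.Perm (Fin k) := σ * Equiv.swap i j with hτ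
    have hsplit : ∀ h : Fin k → T,
        ∑ x, h x = (∑ x ∈ Finset.univ \ {i,j}, h x) + (h i + h j) := by
      intro h
      rw [← Finset.sum_pair hij,
        ← Finset.sum_sdiff (Finset.subset_univ ({i,j} : Finset (Fin k)))]
    have hdiffeq : ∀ x ∈ Finset.univ \ ({i,j} : Finset (Fin k)), B x (τ x) = B x (σ x) := by
      intro x hx
      rw [Finset.mem_sdiff, Finset.mem_insert, Finset.mem_singleton] at hx
      push_neg at hx
      rw [hτ]
      show B x (σ (Equiv.swap i j x)) = B x (σ x)
      rw [Equiv.swap_apply_of_ne_of_ne hx.2.1 hx.2.2]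
    have hτi : τ i = σ j := by
      rw [hτ]
      show σ (Equiv.swap i j i) = σ j
      rw [Equiv.swap_apply_left]
    have hτj : τ j = σ i := by
      rw [hτ]
      show σ (Equiv.swap i j j) = σ i
      rw [Equiv.swap_apply_right]
    have hwtτ : wt B σ ≤ wt B τ := by
      rw [wt, wt, hsplit (fun x => B x (σ x)), hsplit (fun x => B x (τ x)),
        Finset.sum_congr rfl hdiffeq, hτi, hτj]
      exact add_le_add_right hkey _
    have hτ1 : per B ≤ wt B τ := by
      rw [← hσ]
      exact hwtτ
    have hτ2 : wt B τ ≤ per B := Finset.le_sup (f := fun σ => wt B σ) (Finset.mem_univ τ)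
    have hτper : wt B τ = per B := le_antisymm hτ2 hτ1
    have hτσ : τ = σ := huniq τ hτper
    have : σ j = σ i := by
      rw [← hτi, hτσ]
    exact hij (σ.injective this).symm
  have hmem' : R.card ∈ {r : ℕ | HasNSsub E r} := hmem
  exact le_antisymm (csSup_le ⟨R.card, hmem'⟩ hupper) (le_csSup ⟨R.card, hupper⟩ hmem')

end Stmt19Crit

/-- For a von Neumann regular matrix, in the idempotent case `E ⊙ E = E`
with `ρ(E) = 0`, the tropical, row and column ranks coincide and equal the number of
strongly connected components of the critical graph of `E`. -/
theorem stmt19 {n : ℕ} (E : Fin n → Fin n → T)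
    (hreg : ∃ X : Fin n → Fin n → T, tmul (tmul E X) E = E)
    (hid : tmul E E = E) (h0 : RhoEq E 0)
    (R : Finset (Fin n)) (hR : SccReps E 0 R) :
    trrk E = R.card ∧ rowrk E = R.card ∧ colrk E = R.card := by
  have hRne : R.Nonempty := by
    obtain ⟨ℓ, c, hc⟩ := h0.1
    obtain ⟨ρ, hρ, -⟩ := hR.2.2 (c 0) ⟨ℓ, c, hc, 0, rfl⟩
    exact ⟨ρ, hρ⟩
  have hdiagR : ∀ ρ ∈ R, E ρ ρ = 0 := fun ρ h => diag_of_node hid h0 (hR.1 ρ h)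
  have hPfalse : ∀ r ∈ R, ∀ r' ∈ R, r ≠ r' → ¬ (0 ≤ E r r' + E r' r) := by
    intro r hr r' hr' hrr' h
    exact hR.2.1 r hr r' hr' hrr'
      (scc_of_P (le_antisymm (le_trans (tr_of hid r r' r) (diag_le h0 r)) h))
  refine ⟨trrk_eq hid h0 R hR hRne, ?_, ?_⟩
  · have hspan' : ∀ i j, (fun a b => E b a) i j
        = R.sup fun ρ => (fun a b => E b a) i ρ + (fun a b => E b a) ρ j := by
      intro i j
      dsimp only
      rw [span_lemma hid h0 R hR j i]
      exact Finset.sup_congr rfl fun ρ _ => add_comm _ _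
    have hne' : ∀ r ∈ R, ∀ r' ∈ R, r ≠ r' →
        ¬ (0 ≤ (fun a b => E b a) r r' + (fun a b => E b a) r' r) := by
      intro r hr r' hr' hrr'
      dsimp only
      exact hPfalse r' hr' r hr hrr'.symm
    exact weakDim_eq (fun a b => E b a) R hdiagR hne' hspan'
  · exact weakDim_eq E R hdiagR hPfalse (fun i j => span_lemma hid h0 R hR i j)
end
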